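/- arXiv:2202.02858 — 3 statements merged into one kernel-verified Lean document; each statement's English description precedes it below -/
import Mathlib

section
/- Let V₁,…,V_d be smooth vector fields on a manifold M satisfying Hörmander's condition, and define the flag of C^∞(M)-modules 𝒟₁ ⊆ 𝒟₂ ⊆ ⋯ by 𝒟₁ = span{V₁,…,V_d} and 𝒟_k = 𝒟_{k−1} + [𝒟₁, 𝒟_{k−1}]. Let x₀ be a regular point with step r = r(x₀). Then there exist a neighbourhood U of x₀ and sets of words ℐ₁,…,ℐ_r (with ℐ_k consisting of words of length k over {1,…,d}) such that: (i) ℐ_k ⊆ ℐ₁ × ℐ_{k−1} for each k ≥ 2, and (ii) for each k = 1,…,r, the vector fields {V_I : I ∈ ℐ₁ ∪ ⋯ ∪ ℐ_k} form a local frame of 𝒟_k on U, where for a word I = (i₁,…,i_k), V_I := [V_{i₁},[V_{i₂},…,[V_{i_{k−1}}, V_{i_k}]…]]. -/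
/-- Lie bracket of vector fields on `ℝ^n`, `[A,B]^j = A(B^j) − B(A^j)`. -/
noncomputable def lieb {n : ℕ} (A B : (Fin n → ℝ) → (Fin n → ℝ)) :
    (Fin n → ℝ) → (Fin n → ℝ) := fun x j =>
  fderiv ℝ (fun y => B y j) x (A x) - fderiv ℝ (fun y => A y j) x (B x)

/-- Iterated bracket `V_I = [V_{i₁},[V_{i₂},…,[V_{i_{k−1}},V_{i_k}]…]]`
associated with a word `I` over `{1,…,d}` (the empty word gives `0`). -/
noncomputable def VIbr {n d : ℕ} (V : Fin d → (Fin n → ℝ) → (Fin n → ℝ)) :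
    List (Fin d) → (Fin n → ℝ) → (Fin n → ℝ)
  | [] => fun _ _ => 0
  | [i] => V i
  | i :: j :: J => lieb (V i) (VIbr V (j :: J))

/-- The flag `𝒟_k(x) = span{V_I(x) : 1 ≤ |I| ≤ k}`. -/
noncomputable def Dflag {n d : ℕ} (V : Fin d → (Fin n → ℝ) → (Fin n → ℝ))
    (k : ℕ) (x : Fin n → ℝ) : Submodule ℝ (Fin n → ℝ) :=
  Submodule.span ℝ {w | ∃ I : List (Fin d), I ≠ [] ∧ I.length ≤ k ∧ VIbr V I x = w}

open Set Submodule Module Filter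
open scoped Matrix

lemma contDiff_lieb {n : ℕ} {A B : (Fin n → ℝ) → (Fin n → ℝ)}
    (hA : ContDiff ℝ (⊤ : ℕ∞) A) (hB : ContDiff ℝ (⊤ : ℕ∞) B) : ContDiff ℝ (⊤ : ℕ∞) (lieb A B) := by
  rw [contDiff_pi]
  intro j
  exact (((contDiff_pi.mp hB j).fderiv_right (by simp)).clm_apply hA).sub
    (((contDiff_pi.mp hA j).fderiv_right (by simp)).clm_apply hB)

lemma contDiff_VIbr {n d : ℕ} {V : Fin d → (Fin n → ℝ) → (Fin n → ℝ)}
    (hV : ∀ α, ContDiff ℝ (⊤ : ℕ∞) (V α)) : ∀ I, ContDiff ℝ (⊤ : ℕ∞) (VIbr V I)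
  | [] => by simpa [VIbr] using contDiff_const
  | [i] => hV i
  | i :: j :: J => contDiff_lieb (hV i) (contDiff_VIbr hV (j :: J))

lemma contDiff_mdet {n : ℕ} {ι : Type*} [Fintype ι] [DecidableEq ι]
    {M : (Fin n → ℝ) → Matrix ι ι ℝ}
    (hM : ∀ i j, ContDiff ℝ (⊤ : ℕ∞) fun y => (M y) i j) :
    ContDiff ℝ (⊤ : ℕ∞) fun y => (M y).det := by
  simp only [Matrix.det_apply']
  exact ContDiff.sum fun σ _ =>
    (contDiff_const).mul (contDiff_prod fun i _ => hM (σ i) i)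

lemma lieb_swap {n : ℕ} (A B : (Fin n → ℝ) → (Fin n → ℝ)) (x : Fin n → ℝ) :
    lieb A B x = - lieb B A x := by
  funext j
  simp only [lieb, Pi.neg_apply]
  ring

lemma exists_dual {n : ℕ} {ι : Type*} [Fintype ι] [DecidableEq ι] {W : ι → (Fin n → ℝ)} (hW : LinearIndependent ℝ W) :
    ∃ π : (Fin n → ℝ) →ₗ[ℝ] (ι → ℝ), ∀ j, π (W j) = Pi.single j 1 := by
  set S := Submodule.span ℝ (Set.range W)
  obtain ⟨q, hq⟩ := Submodule.exists_isCompl S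
  let b : Basis ι ℝ S := Basis.span hW
  refine ⟨(b.equivFun : S →ₗ[ℝ] (ι → ℝ)) ∘ₗ S.linearProjOfIsCompl q hq, fun j => ?_⟩
  have hmem : W j ∈ S := Submodule.subset_span (Set.mem_range_self j)
  have h1 : S.linearProjOfIsCompl q hq (W j) = b j := by
    have : (⟨W j, hmem⟩ : S) = b j := by
      ext; rw [Basis.span_apply]
    rw [← this]
    exact Submodule.linearProjOfIsCompl_apply_left hq ⟨W j, hmem⟩
  simp only [LinearMap.comp_apply, h1]
  funext i
  simp [Basis.equivFun_self, Pi.single_apply, eq_comm]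

lemma frame_coeffs {n : ℕ} {ι : Type*} [Fintype ι] [DecidableEq ι]
    {W : ι → (Fin n → ℝ) → (Fin n → ℝ)}
    (hW : ∀ j, ContDiff ℝ (⊤ : ℕ∞) (W j)) {x₀ : Fin n → ℝ}
    (hind : LinearIndependent ℝ (fun j => W j x₀)) :
    ∃ U : Set (Fin n → ℝ), IsOpen U ∧ x₀ ∈ U ∧
      (∀ x ∈ U, LinearIndependent ℝ (fun j => W j x)) ∧
      (∀ X : (Fin n → ℝ) → (Fin n → ℝ), ContDiff ℝ (⊤ : ℕ∞) X →
        (∀ᶠ x in nhds x₀, X x ∈ Submodule.span ℝ (Set.range fun j => W j x)) →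
        ∃ c : ι → (Fin n → ℝ) → ℝ,
          (∀ j, ContDiffAt ℝ (⊤ : ℕ∞) (c j) x₀) ∧
          ∀ᶠ x in nhds x₀, X x = ∑ j, c j x • W j x) := by
  obtain ⟨pp, hpp⟩ := exists_dual hind
  set M : (Fin n → ℝ) → Matrix ι ι ℝ :=
    fun x => Matrix.of fun i j => pp (W j x) i with hMdef
  have hMsm : ∀ i j, ContDiff ℝ (⊤ : ℕ∞) fun y => M y i j := fun i j =>
    contDiff_pi.mp ((pp.toContinuousLinearMap.contDiff).comp (hW j)) i
  have hdet : ContDiff ℝ (⊤ : ℕ∞) fun y => (M y).det := contDiff_mdet hMsm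
  have hM0 : M x₀ = 1 := by
    ext i j
    simp [hMdef, hpp j, Matrix.one_apply, Pi.single_apply, eq_comm]
  have key : ∀ (x : Fin n → ℝ) (g : ι → ℝ),
      M x *ᵥ g = pp (∑ j, g j • W j x) := by
    intro x g
    funext i
    simp only [map_sum, map_smul, Matrix.mulVec, dotProduct, Finset.sum_apply,
      Pi.smul_apply, smul_eq_mul, hMdef, Matrix.of_apply]
    exact Finset.sum_congr rfl fun j _ => mul_comm _ _
  refine ⟨{x | (M x).det ≠ 0}, isOpen_compl_singleton.preimage hdet.continuous,
    by simp [hM0], ?_, ?_⟩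
  · intro x hx
    rw [Fintype.linearIndependent_iff]
    intro g hg
    have h2 : M x *ᵥ g = 0 := by rw [key, hg, map_zero]
    exact fun i => congrFun (Matrix.eq_zero_of_mulVec_eq_zero hx h2) i
  · intro X hX hmem
    set b : (Fin n → ℝ) → (ι → ℝ) := fun x => pp (X x) with hbdef
    have hbsm : ContDiff ℝ (⊤ : ℕ∞) b := (pp.toContinuousLinearMap.contDiff).comp hX
    set c : ι → (Fin n → ℝ) → ℝ :=
      fun j x => ((M x).det)⁻¹ * Matrix.cramer (M x) (b x) j with hcdef
    have hcsm : ∀ j, ContDiffAt ℝ (⊤ : ℕ∞) (c j) x₀ := by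
      intro j
      apply ContDiffAt.mul
      · exact (hdet.contDiffAt).inv (by simp [hM0])
      · have : ∀ x, Matrix.cramer (M x) (b x) j
            = ((M x).updateCol j (b x)).det := fun x => Matrix.cramer_apply _ _ _
        simp only [this]
        apply ContDiff.contDiffAt
        apply contDiff_mdet
        intro i k
        rcases eq_or_ne k j with rfl | hkj
        · simp only [Matrix.updateCol_apply, if_pos rfl]
          exact contDiff_pi.mp hbsm i
        · simp only [Matrix.updateCol_apply, if_neg hkj]
          exact hMsm i k
    refine ⟨c, hcsm, ?_⟩
    have hU : ∀ᶠ x in nhds x₀, (M x).det ≠ 0 :=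
      (isOpen_compl_singleton.preimage hdet.continuous).mem_nhds (by simp [hM0])
    filter_upwards [hmem, hU] with x hxmem hxU
    have hcr : M x *ᵥ (fun j => c j x) = b x := by
      have h1 : (fun j => c j x) = ((M x).det)⁻¹ • Matrix.cramer (M x) (b x) := by
        funext j; simp [hcdef]
      rw [h1, Matrix.mulVec_smul, Matrix.mulVec_cramer, smul_smul,
        inv_mul_cancel₀ hxU, one_smul]
    set Y : Fin n → ℝ := X x - ∑ j, c j x • W j x with hYdef
    have hppY : pp Y = 0 := by
      rw [hYdef, map_sub, ← key x (fun j => c j x), hcr, sub_self]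
    have hYmem : Y ∈ Submodule.span ℝ (Set.range fun j => W j x) :=
      Submodule.sub_mem _ hxmem
        (Submodule.sum_mem _ fun j _ =>
          Submodule.smul_mem _ _ (Submodule.subset_span (Set.mem_range_self j)))
    obtain ⟨g, hg⟩ := (mem_span_range_iff_exists_fun ℝ).mp hYmem
    have hg0 : M x *ᵥ g = 0 := by rw [key, hg, hppY]
    have : g = 0 := Matrix.eq_zero_of_mulVec_eq_zero hxU hg0
    rw [this] at hg
    simp only [Pi.zero_apply, zero_smul, Finset.sum_const_zero] at hg
    have : Y = 0 := hg.symm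
    rw [hYdef, sub_eq_zero] at this
    exact this

lemma lieb_expand {n : ℕ} {ι : Type*} [Fintype ι] {A B : (Fin n → ℝ) → (Fin n → ℝ)}
    {W : ι → (Fin n → ℝ) → (Fin n → ℝ)} {c : ι → (Fin n → ℝ) → ℝ}
    {x₀ : Fin n → ℝ}
    (hA : ContDiff ℝ (⊤ : ℕ∞) A) (hW : ∀ j, ContDiff ℝ (⊤ : ℕ∞) (W j))
    (hc : ∀ j, ContDiffAt ℝ (⊤ : ℕ∞) (c j) x₀)
    (hB : ∀ᶠ x in nhds x₀, B x = ∑ j, c j x • W j x) :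
    lieb A B x₀ = ∑ j, c j x₀ • lieb A (W j) x₀
      + ∑ j, (fderiv ℝ (c j) x₀ (A x₀)) • W j x₀ := by
  funext l
  have hdW : ∀ j, DifferentiableAt ℝ (fun y => W j y l) x₀ := fun j =>
    ((contDiff_pi.mp (hW j) l).differentiable (by simp)) x₀
  have hdc : ∀ j, DifferentiableAt ℝ (c j) x₀ := fun j =>
    (hc j).differentiableAt (by simp)
  have he : (fun y => B y l) =ᶠ[nhds x₀] (fun y => ∑ j, c j y * W j y l) :=
    hB.mono fun x hx => by simp only []; rw [hx]; simp
  have h1 : fderiv ℝ (fun y => B y l) x₀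
      = ∑ j, (c j x₀ • fderiv ℝ (fun y => W j y l) x₀ + W j x₀ l • fderiv ℝ (c j) x₀) := by
    rw [he.fderiv_eq, fderiv_fun_sum (fun j _ => (hdc j).fun_mul (hdW j))]
    exact Finset.sum_congr rfl fun j _ => fderiv_mul (hdc j) (hdW j)
  have h2 : B x₀ = ∑ j, c j x₀ • W j x₀ := hB.self_of_nhds
  simp only [lieb, Pi.add_apply, Finset.sum_apply, Pi.smul_apply, smul_eq_mul, h1, h2,
    ContinuousLinearMap.sum_apply, ContinuousLinearMap.add_apply,
    ContinuousLinearMap.smul_apply, map_sum, map_smul]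
  rw [← Finset.sum_sub_distrib, ← Finset.sum_add_distrib]
  exact Finset.sum_congr rfl fun j _ => by ring

lemma Dflag_zero {n d : ℕ} (V : Fin d → (Fin n → ℝ) → (Fin n → ℝ)) (x : Fin n → ℝ) :
    Dflag V 0 x = ⊥ := by
  rw [Dflag, show {w | ∃ I : List (Fin d), I ≠ [] ∧ I.length ≤ 0 ∧ VIbr V I x = w} = ∅ from ?_,
    Submodule.span_empty]
  ext w
  simp only [Set.mem_setOf_eq, Set.mem_empty_iff_false, iff_false, not_exists]
  rintro I ⟨hne, hlen, -⟩
  exact hne (List.length_eq_zero_iff.mp (Nat.le_zero.mp hlen))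

lemma Dflag_mono {n d : ℕ} (V : Fin d → (Fin n → ℝ) → (Fin n → ℝ)) {k k' : ℕ}
    (h : k ≤ k') (x : Fin n → ℝ) : Dflag V k x ≤ Dflag V k' x := by
  apply Submodule.span_mono
  rintro w ⟨I, h1, h2, h3⟩
  exact ⟨I, h1, h2.trans h, h3⟩

lemma VIbr_mem_Dflag {n d : ℕ} {V : Fin d → (Fin n → ℝ) → (Fin n → ℝ)} {I : List (Fin d)}
    {k : ℕ} (h1 : I ≠ []) (h2 : I.length ≤ k) (x : Fin n → ℝ) :
    VIbr V I x ∈ Dflag V k x :=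
  Submodule.subset_span ⟨I, h1, h2, rfl⟩

lemma VIbr_cons {n d : ℕ} (V : Fin d → (Fin n → ℝ) → (Fin n → ℝ)) (i : Fin d)
    {J : List (Fin d)} (hJ : J ≠ []) : VIbr V (i :: J) = lieb (V i) (VIbr V J) := by
  cases J with
  | nil => exact absurd rfl hJ
  | cons j J' => rfl

lemma range_fam {n d : ℕ} (V : Fin d → (Fin n → ℝ) → (Fin n → ℝ))
    (G : Finset (List (Fin d))) (x : Fin n → ℝ) :
    Set.range (fun I : G => VIbr V I.1 x) = (fun I => VIbr V I x) '' ↑G := by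
  ext w
  constructor
  · rintro ⟨⟨I, hI⟩, rfl⟩; exact ⟨I, hI, rfl⟩
  · rintro ⟨I, hI, rfl⟩; exact ⟨⟨I, hI⟩, rfl⟩

lemma extend_frame {n d : ℕ} {V : Fin d → (Fin n → ℝ) → (Fin n → ℝ)}
    (hV : ∀ α, ContDiff ℝ (⊤ : ℕ∞) (V α)) {x₀ : Fin n → ℝ} {U₀ : Set (Fin n → ℝ)}
    (hreg : ∀ x ∈ U₀, ∀ k,
      Module.finrank ℝ (Dflag V k x) = Module.finrank ℝ (Dflag V k x₀))
    {k : ℕ} {U : Set (Fin n → ℝ)} (hUo : IsOpen U) (hx₀U : x₀ ∈ U) (hUsub : U ⊆ U₀)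
    {ℐ : ℕ → Finset (List (Fin d))}
    (hlen : ∀ j, ∀ I ∈ ℐ j, I.length = j)
    (hempty : ∀ j, (j = 0 ∨ k < j) → ℐ j = ∅)
    (hframe : ∀ j, j ≤ k → ∀ x ∈ U,
      LinearIndependent ℝ
        (fun I : ((Finset.range (j+1)).biUnion ℐ : Finset (List (Fin d))) => VIbr V I.1 x)
      ∧ Submodule.span ℝ
          (Set.range (fun I : ((Finset.range (j+1)).biUnion ℐ : Finset (List (Fin d))) =>
            VIbr V I.1 x)) = Dflag V j x)
    {T : Finset (List (Fin d))}
    (hTlen : ∀ I ∈ T, I.length = k + 1)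
    (hspan : Dflag V (k+1) x₀ ≤
      Dflag V k x₀ ⊔ Submodule.span ℝ ((fun I => VIbr V I x₀) '' ↑T)) :
    ∃ U', U' ⊆ U ∧ IsOpen U' ∧ x₀ ∈ U' ∧ ∃ T', T' ⊆ T ∧
      ∀ j, j ≤ k + 1 → ∀ x ∈ U',
        LinearIndependent ℝ
          (fun I : ((Finset.range (j+1)).biUnion (Function.update ℐ (k+1) T')
              : Finset (List (Fin d))) => VIbr V I.1 x)
        ∧ Submodule.span ℝ
            (Set.range (fun I : ((Finset.range (j+1)).biUnion (Function.update ℐ (k+1) T')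
                : Finset (List (Fin d))) => VIbr V I.1 x)) = Dflag V j x := by
  classical
  set val : List (Fin d) → (Fin n → ℝ) := fun I => VIbr V I x₀ with hval
  set F : Finset (List (Fin d)) := (Finset.range (k+1)).biUnion ℐ with hF
  have hFmem : ∀ I ∈ F, I ≠ [] ∧ I.length ≤ k := by
    intro I hI
    obtain ⟨j, hj, hIj⟩ := Finset.mem_biUnion.mp hI
    have hjk : j < k + 1 := Finset.mem_range.mp hj
    have hj0 : j ≠ 0 := by
      rintro rfl
      rw [hempty 0 (Or.inl rfl)] at hIj
      exact absurd hIj (Finset.notMem_empty I)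
    have hlenI := hlen j I hIj
    exact ⟨by rw [← List.length_pos_iff_ne_nil]; omega, by omega⟩
  have hframe_k := hframe k le_rfl x₀ hx₀U
  set s : Set (Fin n → ℝ) := val '' ↑F with hs
  have hs_eq : s = Set.range (fun I : F => VIbr V I.1 x₀) := (range_fam V F x₀).symm
  have hs_li : LinearIndependent ℝ ((↑) : s → (Fin n → ℝ)) := by
    rw [hs_eq]
    exact (linearIndepOn_id_range_iff hframe_k.1.injective).mpr hframe_k.1
  have hs_span : Submodule.span ℝ s = Dflag V k x₀ := by
    rw [hs_eq]; exact hframe_k.2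
  obtain ⟨b, hbt, hsb, htb, hb_li⟩ :=
    exists_linearIndepOn_id_extension hs_li (Set.subset_union_left (t := val '' ↑T))
  have hbsub : b ⊆ (Dflag V (k+1) x₀ : Set (Fin n → ℝ)) := by
    intro v hv
    rcases hbt hv with h | ⟨I, hI, rfl⟩
    · exact Dflag_mono V (Nat.le_succ k) x₀ (hs_span ▸ Submodule.subset_span h)
    · exact VIbr_mem_Dflag (by have := hTlen I hI; rw [← List.length_pos_iff_ne_nil]; omega)
        (le_of_eq (hTlen I hI)) x₀
  have hspanb : Submodule.span ℝ b = Dflag V (k+1) x₀ := by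
    apply le_antisymm
    · rw [Submodule.span_le]; exact hbsub
    · refine hspan.trans (sup_le ?_ ?_)
      · rw [← hs_span]; exact Submodule.span_mono hsb
      · rw [Submodule.span_le]; exact fun v hv => htb (Or.inr hv)
  have hbfin : b.Finite :=
    ((F.finite_toSet.image val).union (T.finite_toSet.image val)).subset hbt
  set bs : Set (Fin n → ℝ) := b \ s with hbs
  have hbsfin : bs.Finite := hbfin.subset Set.diff_subset
  have hchoice : ∀ v ∈ bs, ∃ I, I ∈ T ∧ val I = v := by
    intro v hv
    rcases hbt hv.1 with h | ⟨I, hI, h⟩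
    · exact absurd h hv.2
    · exact ⟨I, hI, h⟩
  choose! g hgT hgval using hchoice
  set T' : Finset (List (Fin d)) := hbsfin.toFinset.image g with hT'
  have hT'sub : T' ⊆ T := by
    intro I hI
    obtain ⟨v, hv, rfl⟩ := Finset.mem_image.mp hI
    exact hgT v (hbsfin.mem_toFinset.mp hv)
  have hT'val : ∀ I ∈ T', ∃ v ∈ bs, g v = I ∧ val I = v := by
    intro I hI
    obtain ⟨v, hv, rfl⟩ := Finset.mem_image.mp hI
    have hv' := hbsfin.mem_toFinset.mp hv
    exact ⟨v, hv', rfl, hgval v hv'⟩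
  have hvalT' : val '' ↑T' = bs := by
    ext w
    constructor
    · rintro ⟨I, hI, rfl⟩
      obtain ⟨v, hv, -, hIv⟩ := hT'val I hI
      rw [hIv]; exact hv
    · intro hw
      exact ⟨g w, Finset.mem_image_of_mem g (hbsfin.mem_toFinset.mpr hw), hgval w hw⟩
  set F' : Finset (List (Fin d)) := F ∪ T' with hF'
  have hvalF' : val '' ↑F' = b := by
    rw [hF', Finset.coe_union, Set.image_union, hvalT', ← hs]
    exact Set.union_diff_cancel hsb
  have hFT' : ∀ I ∈ F, I ∉ T' := by
    intro I hIF hIT'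
    have h1 := (hFmem I hIF).2
    have h2 := hTlen I (hT'sub hIT')
    omega
  -- injectivity of val on F'
  have hFinj : ∀ I₁ ∈ F, ∀ I₂ ∈ F, val I₁ = val I₂ → I₁ = I₂ := by
    intro I₁ h₁ I₂ h₂ h
    have := hframe_k.1.injective (a₁ := ⟨I₁, h₁⟩) (a₂ := ⟨I₂, h₂⟩) h
    exact Subtype.mk_eq_mk.mp this
  have hinj : ∀ I₁ ∈ F', ∀ I₂ ∈ F', val I₁ = val I₂ → I₁ = I₂ := by
    intro I₁ h₁ I₂ h₂ h
    rcases Finset.mem_union.mp h₁ with h₁' | h₁' <;>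
      rcases Finset.mem_union.mp h₂ with h₂' | h₂'
    · exact hFinj I₁ h₁' I₂ h₂' h
    · obtain ⟨v, hv, -, hIv⟩ := hT'val I₂ h₂'
      exact absurd (hIv ▸ h ▸ Set.mem_image_of_mem val (Finset.mem_coe.mpr h₁')) hv.2
    · obtain ⟨v, hv, -, hIv⟩ := hT'val I₁ h₁'
      exact absurd (hIv ▸ h.symm ▸ Set.mem_image_of_mem val (Finset.mem_coe.mpr h₂')) hv.2
    · obtain ⟨v₁, hv₁, hg₁, hIv₁⟩ := hT'val I₁ h₁'
      obtain ⟨v₂, hv₂, hg₂, hIv₂⟩ := hT'val I₂ h₂'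
      rw [← hg₁, ← hg₂]
      rw [hIv₁, hIv₂] at h
      rw [h]
  -- linear independence of the family over F' at x₀
  have hli0 : LinearIndependent ℝ (fun I : F' => val I.1) := by
    have hmem : ∀ I : F', val I.1 ∈ b := by
      intro I
      rw [← hvalF']
      exact Set.mem_image_of_mem val (Finset.mem_coe.mpr I.2)
    have : (fun I : F' => val I.1) = (fun v : b => (v : Fin n → ℝ)) ∘
        (fun I : F' => (⟨val I.1, hmem I⟩ : b)) := rfl
    rw [this]
    apply LinearIndependent.comp hb_li
    intro I₁ I₂ hI
    have : val I₁.1 = val I₂.1 := Subtype.mk_eq_mk.mp hI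
    exact Subtype.ext (hinj I₁.1 I₁.2 I₂.1 I₂.2 this)
  obtain ⟨U₁, hU₁o, hx₀U₁, hU₁li, -⟩ :=
    frame_coeffs (W := fun I : F' => VIbr V I.1) (fun I => contDiff_VIbr hV I.1) hli0
  refine ⟨U ∩ U₁, Set.inter_subset_left, hUo.inter hU₁o, ⟨hx₀U, hx₀U₁⟩, T', hT'sub, ?_⟩
  intro j hj x hx
  rcases Nat.lt_or_ge j (k+1) with hjk | hjk
  · have hE : (Finset.range (j+1)).biUnion (Function.update ℐ (k+1) T')
        = (Finset.range (j+1)).biUnion ℐ := by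
      apply Finset.biUnion_congr rfl
      intro a ha
      exact Function.update_of_ne (by have := Finset.mem_range.mp ha; omega) _ _
    rw [hE]
    exact hframe j (by omega) x hx.1
  · have hj' : j = k + 1 := by omega
    subst hj'
    have hE : (Finset.range (k+2)).biUnion (Function.update ℐ (k+1) T') = F' := by
      rw [Finset.range_add_one, Finset.biUnion_insert]
      have h1 : Function.update ℐ (k+1) T' (k+1) = T' := Function.update_self _ _ _
      have h2 : (Finset.range (k+1)).biUnion (Function.update ℐ (k+1) T')
          = (Finset.range (k+1)).biUnion ℐ := by
        apply Finset.biUnion_congr rfl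
        intro a ha
        exact Function.update_of_ne (by have := Finset.mem_range.mp ha; omega) _ _
      rw [h1, h2, hF']
      exact Finset.union_comm _ _
    rw [hE]
    refine ⟨hU₁li x hx.2, ?_⟩
    have hle : Submodule.span ℝ (Set.range (fun I : F' => VIbr V I.1 x))
        ≤ Dflag V (k+1) x := by
      rw [Submodule.span_le]
      rintro w ⟨⟨I, hI⟩, rfl⟩
      rcases Finset.mem_union.mp hI with h | h
      · obtain ⟨hne, hlenI⟩ := hFmem I h
        exact VIbr_mem_Dflag hne (by omega) x
      · have := hTlen I (hT'sub h)
        exact VIbr_mem_Dflag (by rw [← List.length_pos_iff_ne_nil]; omega) (le_of_eq this) x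
    have hcard : Module.finrank ℝ (Dflag V (k+1) x₀) = Fintype.card F' := by
      rw [← hspanb, ← hvalF', ← range_fam V F' x₀]
      exact finrank_span_eq_card hli0
    have hrk : Module.finrank ℝ (Dflag V (k+1) x)
        = Module.finrank ℝ (Submodule.span ℝ (Set.range (fun I : F' => VIbr V I.1 x))) := by
      rw [finrank_span_eq_card (hU₁li x hx.2), hreg x (hUsub hx.1) (k+1), hcard]
    exact Submodule.eq_of_le_of_finrank_le hle (le_of_eq hrk)

lemma mem_F1 {d : ℕ} {ℐ : ℕ → Finset (List (Fin d))}
    (hlen : ∀ j, ∀ I ∈ ℐ j, I.length = j) (hz : ℐ 0 = ∅)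
    {I : List (Fin d)} (hI : I ∈ (Finset.range 2).biUnion ℐ) :
    ∃ i : Fin d, I = [i] ∧ [i] ∈ ℐ 1 := by
  obtain ⟨j, hj, hIj⟩ := Finset.mem_biUnion.mp hI
  have hj2 := Finset.mem_range.mp hj
  interval_cases j
  · rw [hz] at hIj; exact absurd hIj (Finset.notMem_empty I)
  · obtain ⟨i, rfl⟩ := List.length_eq_one_iff.mp (hlen 1 I hIj)
    exact ⟨i, rfl, hIj⟩

set_option maxHeartbeats 1000000 in
/-- Existence of adapted local frames at a regular point of a Hörmander system:
there are a neighbourhood `U` of `x₀` and sets of words `ℐ_k` of length `k`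
with `ℐ_k ⊆ ℐ₁ × ℐ_{k−1}` such that for each `k = 1,…,r`, the brackets
`{V_I : I ∈ ℐ₁ ∪ ⋯ ∪ ℐ_k}` form a local frame of `𝒟_k` on `U`. -/
theorem stmt13 (n d : ℕ) (V : Fin d → (Fin n → ℝ) → (Fin n → ℝ))
    (hV : ∀ α, ContDiff ℝ (⊤ : ℕ∞) (V α))
    -- Hörmander's condition
    (hHor : ∀ x : Fin n → ℝ,
      Submodule.span ℝ {w | ∃ I : List (Fin d), I ≠ [] ∧ VIbr V I x = w} = ⊤)
    (x₀ : Fin n → ℝ) (r : ℕ)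
    -- `r = r(x₀)` is the step at `x₀`
    (hr : Dflag V r x₀ = ⊤ ∧ ∀ k < r, Dflag V k x₀ ≠ ⊤)
    -- `x₀` is a regular point: the growth vector is locally constant
    (hreg : ∃ U₀ ∈ nhds x₀, ∀ x ∈ U₀, ∀ k,
      Module.finrank ℝ (Dflag V k x) = Module.finrank ℝ (Dflag V k x₀)) :
    ∃ U ∈ nhds x₀, ∃ ℐ : ℕ → Finset (List (Fin d)),
      (∀ k, ∀ I ∈ ℐ k, I.length = k)
      ∧ (∀ k, 2 ≤ k → k ≤ r → ∀ I ∈ ℐ k,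
          ∃ (i : Fin d) (J : List (Fin d)),
            I = i :: J ∧ [i] ∈ ℐ 1 ∧ J ∈ ℐ (k - 1))
      ∧ (∀ k, 1 ≤ k → k ≤ r → ∀ x ∈ U,
          LinearIndependent ℝ
            (fun I : ((Finset.range (k + 1)).biUnion ℐ : Finset (List (Fin d))) =>
              VIbr V I.1 x)
          ∧ Submodule.span ℝ
              (Set.range
                (fun I : ((Finset.range (k + 1)).biUnion ℐ : Finset (List (Fin d))) =>
                  VIbr V I.1 x))
            = Dflag V k x) := by
  classical
  obtain ⟨U₀', hU₀nhds, hreg'⟩ := hreg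
  obtain ⟨U₀, hU₀sub, hU₀o, hx₀U₀⟩ := mem_nhds_iff.mp hU₀nhds
  have hreg0 : ∀ x ∈ U₀, ∀ k,
      Module.finrank ℝ (Dflag V k x) = Module.finrank ℝ (Dflag V k x₀) :=
    fun x hx => hreg' x (hU₀sub hx)
  have claim : ∀ k : ℕ, ∃ U, IsOpen U ∧ x₀ ∈ U ∧ U ⊆ U₀ ∧
      ∃ ℐ : ℕ → Finset (List (Fin d)),
        (∀ j, ∀ I ∈ ℐ j, I.length = j) ∧
        (∀ j, (j = 0 ∨ k < j) → ℐ j = ∅) ∧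
        (∀ j, 2 ≤ j → j ≤ k → ∀ I ∈ ℐ j,
          ∃ (i : Fin d) (J : List (Fin d)), I = i :: J ∧ [i] ∈ ℐ 1 ∧ J ∈ ℐ (j-1)) ∧
        (∀ j, j ≤ k → ∀ x ∈ U,
          LinearIndependent ℝ
            (fun I : ((Finset.range (j+1)).biUnion ℐ : Finset (List (Fin d))) =>
              VIbr V I.1 x)
          ∧ Submodule.span ℝ
              (Set.range (fun I : ((Finset.range (j+1)).biUnion ℐ : Finset (List (Fin d))) =>
                VIbr V I.1 x)) = Dflag V j x) := by
    intro k
    induction k with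
    | zero =>
      refine ⟨U₀, hU₀o, hx₀U₀, subset_rfl, fun _ => ∅,
        fun j I hI => absurd hI (Finset.notMem_empty I),
        fun _ _ => rfl,
        fun j h2 h0 I hI => absurd (h2.trans h0) (by omega),
        ?_⟩
      intro j hj x hx
      have hj0 : j = 0 := Nat.le_zero.mp hj
      subst hj0
      have hE : (Finset.range 1).biUnion (fun _ => (∅ : Finset (List (Fin d)))) = ∅ := by
        simp
      rw [hE]
      haveI : IsEmpty ((∅ : Finset (List (Fin d))) : Type) :=
        ⟨fun I => absurd I.2 (Finset.notMem_empty I.1)⟩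
      constructor
      · exact linearIndependent_empty_type
      · rw [Set.range_eq_empty, Submodule.span_empty, Dflag_zero]
    | succ k IH =>
      obtain ⟨U, hUo, hx₀U, hUsub, ℐ, hlen, hempty, hnest, hframe⟩ := IH
      -- candidate set T and the span property at x₀
      have hmain : ∃ T : Finset (List (Fin d)),
          (∀ I ∈ T, I.length = k + 1) ∧
          (∀ I ∈ T, ∃ (i : Fin d) (J : List (Fin d)),
            I = i :: J ∧ ((1 ≤ k → [i] ∈ ℐ 1) ∧ (k = 0 ∨ J ∈ ℐ k))) ∧
          Dflag V (k+1) x₀ ≤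
            Dflag V k x₀ ⊔ Submodule.span ℝ ((fun I => VIbr V I x₀) '' ↑T) := by
        rcases Nat.eq_zero_or_pos k with hk | hk
        · -- base step: all length-one words
          subst hk
          refine ⟨Finset.image (fun i => [i]) Finset.univ, ?_, ?_, ?_⟩
          · intro I hI
            obtain ⟨i, -, rfl⟩ := Finset.mem_image.mp hI
            rfl
          · intro I hI
            obtain ⟨i, -, rfl⟩ := Finset.mem_image.mp hI
            exact ⟨i, [], rfl, fun h => absurd h (by omega), Or.inl rfl⟩
          · refine Submodule.span_le.mpr ?_
            rintro w ⟨I, hne, hlenI, rfl⟩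
            have : I.length = 1 := by
              have := List.length_pos_iff_ne_nil.mpr hne; omega
            obtain ⟨i, rfl⟩ := List.length_eq_one_iff.mp this
            apply SetLike.mem_coe.mpr
            apply Submodule.mem_sup_right
            exact Submodule.subset_span
              ⟨[i], Finset.mem_coe.mpr (Finset.mem_image_of_mem _ (Finset.mem_univ i)), rfl⟩
        · -- inductive step: brackets of frame elements
          set F1 : Finset (List (Fin d)) := (Finset.range 2).biUnion ℐ with hF1
          set Fk : Finset (List (Fin d)) := (Finset.range (k+1)).biUnion ℐ with hFk
          have hfr1 := hframe 1 hk
          have hfrk := hframe k le_rfl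
          have hFkmem : ∀ I ∈ Fk, I ≠ [] ∧ I.length ≤ k := by
            intro I hI
            obtain ⟨j, hj, hIj⟩ := Finset.mem_biUnion.mp hI
            have hjk : j < k + 1 := Finset.mem_range.mp hj
            have hj0 : j ≠ 0 := by
              rintro rfl
              rw [hempty 0 (Or.inl rfl)] at hIj
              exact absurd hIj (Finset.notMem_empty I)
            have := hlen j I hIj
            exact ⟨by rw [← List.length_pos_iff_ne_nil]; omega, by omega⟩
          obtain ⟨Ua, hUao, hx₀Ua, -, hcoeff1⟩ :=
            frame_coeffs (W := fun I : F1 => VIbr V I.1)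
              (fun I => contDiff_VIbr hV I.1) (hfr1 x₀ hx₀U).1
          obtain ⟨Ub, hUbo, hx₀Ub, -, hcoeffk⟩ :=
            frame_coeffs (W := fun I : Fk => VIbr V I.1)
              (fun I => contDiff_VIbr hV I.1) (hfrk x₀ hx₀U).1
          have hVmem : ∀ i : Fin d, ∀ᶠ x in nhds x₀,
              V i x ∈ Submodule.span ℝ (Set.range fun I : F1 => VIbr V I.1 x) := by
            intro i
            apply Filter.eventually_of_mem (hUo.mem_nhds hx₀U)
            intro x hx
            rw [(hfr1 x hx).2]
            exact VIbr_mem_Dflag (I := [i]) (by simp) (by simp) x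
          choose c1 hc1sm hc1 using fun i : Fin d => hcoeff1 (V i) (hV i) (hVmem i)
          set T : Finset (List (Fin d)) :=
            Finset.image (fun p : Fin d × List (Fin d) => p.1 :: p.2)
              ((Finset.univ.filter (fun i => [i] ∈ ℐ 1)) ×ˢ ℐ k) with hT
          have hTmem : ∀ I ∈ T, ∃ (i : Fin d) (J : List (Fin d)),
              I = i :: J ∧ [i] ∈ ℐ 1 ∧ J ∈ ℐ k := by
            intro I hI
            obtain ⟨⟨i, J⟩, hp, rfl⟩ := Finset.mem_image.mp hI
            obtain ⟨h1, h2⟩ := Finset.mem_product.mp hp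
            exact ⟨i, J, rfl, (Finset.mem_filter.mp h1).2, h2⟩
          have hTmem' : ∀ (i : Fin d) (J : List (Fin d)), [i] ∈ ℐ 1 → J ∈ ℐ k →
              (i :: J) ∈ T := by
            intro i J h1 h2
            have hp : ((i, J) : Fin d × List (Fin d)) ∈
                (Finset.univ.filter (fun i => [i] ∈ ℐ 1)) ×ˢ ℐ k :=
              Finset.mem_product.mpr ⟨Finset.mem_filter.mpr ⟨Finset.mem_univ i, h1⟩, h2⟩
            exact Finset.mem_image_of_mem _ hp
          refine ⟨T, ?_, ?_, ?_⟩
          · intro I hI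
            obtain ⟨i, J, rfl, -, hJ⟩ := hTmem I hI
            have := hlen k J hJ
            simp [this]
          · intro I hI
            obtain ⟨i, J, rfl, h1, hJ⟩ := hTmem I hI
            exact ⟨i, J, rfl, fun _ => h1, Or.inr hJ⟩
          · -- the crucial span estimate
            refine Submodule.span_le.mpr ?_
            rintro w ⟨I, hne, hlenI, rfl⟩
            apply SetLike.mem_coe.mpr
            rcases Nat.lt_or_ge I.length (k+1) with h | h
            · exact Submodule.mem_sup_left (VIbr_mem_Dflag hne (by omega) x₀)
            have hIlen : I.length = k + 1 := by omega
            obtain ⟨i, J', rfl⟩ : ∃ (i : Fin d) (J' : List (Fin d)), I = i :: J' := by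
              cases I with
              | nil => exact absurd rfl hne
              | cons a l => exact ⟨a, l, rfl⟩
            have hJ'len : J'.length = k := by simpa using hIlen
            have hJ'ne : J' ≠ [] := by
              rw [← List.length_pos_iff_ne_nil]; omega
            rw [VIbr_cons V i hJ'ne]
            have hJ'mem : ∀ᶠ x in nhds x₀,
                VIbr V J' x ∈ Submodule.span ℝ (Set.range fun I : Fk => VIbr V I.1 x) := by
              apply Filter.eventually_of_mem (hUo.mem_nhds hx₀U)
              intro x hx
              rw [(hfrk x hx).2]
              exact VIbr_mem_Dflag hJ'ne (le_of_eq hJ'len) x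
            obtain ⟨c, hcsm, hc⟩ := hcoeffk (VIbr V J') (contDiff_VIbr hV J') hJ'mem
            rw [lieb_expand (hV i) (fun J : Fk => contDiff_VIbr hV J.1) hcsm hc]
            apply Submodule.add_mem
            · apply Submodule.sum_mem
              intro J hJu
              apply Submodule.smul_mem
              rcases Nat.lt_or_ge J.1.length k with hlt | hge
              · rw [← VIbr_cons V i (hFkmem J.1 J.2).1]
                apply Submodule.mem_sup_left
                exact VIbr_mem_Dflag (by simp) (by simp; omega) x₀
              · -- J has length exactly k, so J ∈ ℐ k; rewrite V i via the level-1 frame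
                have hJk : J.1 ∈ ℐ k := by
                  obtain ⟨j, hj, hIj⟩ := Finset.mem_biUnion.mp J.2
                  have : J.1.length = j := hlen j J.1 hIj
                  have : j = k := by have := Finset.mem_range.mp hj; omega
                  subst this; exact hIj
                have hswap : lieb (V i) (VIbr V J.1) x₀ = -(lieb (VIbr V J.1) (V i) x₀) :=
                  lieb_swap _ _ x₀
                rw [hswap]
                apply Submodule.neg_mem
                rw [lieb_expand (contDiff_VIbr hV J.1)
                  (fun I' : F1 => contDiff_VIbr hV I'.1) (hc1sm i) (hc1 i)]
                apply Submodule.add_mem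
                · apply Submodule.sum_mem
                  intro I' hI'u
                  apply Submodule.smul_mem
                  obtain ⟨i', hI'eq, hi'1⟩ := mem_F1 hlen (hempty 0 (Or.inl rfl)) I'.2
                  rw [hI'eq]
                  have : lieb (VIbr V J.1) (VIbr V [i']) x₀ = -(VIbr V (i' :: J.1) x₀) := by
                    rw [VIbr_cons V i' (hFkmem J.1 J.2).1]
                    exact (lieb_swap _ _ x₀).symm ▸ (lieb_swap _ _ x₀)
                  rw [this]
                  apply Submodule.neg_mem
                  apply Submodule.mem_sup_right
                  exact Submodule.subset_span
                    ⟨i' :: J.1, Finset.mem_coe.mpr (hTmem' i' J.1 hi'1 hJk), rfl⟩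
                · apply Submodule.sum_mem
                  intro I' hI'u
                  apply Submodule.smul_mem
                  obtain ⟨i', hI'eq, -⟩ := mem_F1 hlen (hempty 0 (Or.inl rfl)) I'.2
                  apply Submodule.mem_sup_left
                  rw [hI'eq]
                  exact VIbr_mem_Dflag (by simp) (by simp; omega) x₀
            · apply Submodule.sum_mem
              intro J hJu
              apply Submodule.smul_mem
              apply Submodule.mem_sup_left
              exact VIbr_mem_Dflag (hFkmem J.1 J.2).1 (hFkmem J.1 J.2).2 x₀
      obtain ⟨T, hTlen, hTnest, hspan⟩ := hmain
      obtain ⟨U', hU'sub, hU'o, hx₀U', T', hT'sub, hframe'⟩ :=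
        extend_frame hV hreg0 hUo hx₀U hUsub hlen hempty hframe hTlen hspan
      refine ⟨U', hU'o, hx₀U', hU'sub.trans hUsub, Function.update ℐ (k+1) T', ?_, ?_, ?_, hframe'⟩
      · intro j I hI
        rcases eq_or_ne j (k+1) with rfl | hj
        · rw [Function.update_self] at hI
          exact hTlen I (hT'sub hI)
        · rw [Function.update_of_ne hj] at hI
          exact hlen j I hI
      · intro j hj
        have hj' : j ≠ k + 1 := by omega
        rw [Function.update_of_ne hj']
        exact hempty j (by omega)
      · intro j h2 hjk I hI
        rcases eq_or_ne j (k+1) with rfl | hj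
        · rw [Function.update_self] at hI
          obtain ⟨i, J, rfl, hi1, hJk⟩ := hTnest I (hT'sub hI)
          have hk1 : 1 ≤ k := by omega
          refine ⟨i, J, rfl, ?_, ?_⟩
          · rw [Function.update_of_ne (by omega)]
            exact hi1 hk1
          · have : k + 1 - 1 = k := by omega
            rw [this, Function.update_of_ne (by omega)]
            rcases hJk with h | h
            · omega
            · exact h
        · rw [Function.update_of_ne hj] at hI
          obtain ⟨i, J, hIJ, hi1, hJ⟩ := hnest j h2 (by omega) I hI
          refine ⟨i, J, hIJ, ?_, ?_⟩
          · rw [Function.update_of_ne (by omega)]; exact hi1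
          · rw [Function.update_of_ne (by omega)]; exact hJ
  obtain ⟨U, hUo, hx₀U, hUsub, ℐ, hlen, hempty, hnest, hframe⟩ := claim r
  refine ⟨U, hUo.mem_nhds hx₀U, ℐ, fun k I hI => hlen k I hI, fun k h2 hkr => hnest k h2 hkr,
    fun k h1 hkr x hx => hframe k hkr x hx⟩
end

section
/- Let γ : [0,T] → ℝ^n be a C¹ path and let φ₁, …, φ_m (m ≥ 1) be continuous one-forms on ℝ^n such that there do NOT exist times t₁ < t₂ < ⋯ < t_m in [0,T] with γ(t_i) ∈ (supp φ_i)° for all i (i.e., γ does not visit the interiors of the supports of φ₁,…,φ_m in order). Then the iterated line integral ∫_{0<t₁<⋯<t_m<T} φ₁(dγ_{t₁})⋯φ_m(dγ_{t_m}) is zero. -/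
open MeasureTheory

/-- A continuous function vanishes outside the interior of its support. -/
lemma eq_zero_of_nmem_interior_tsupport {α β : Type*} [TopologicalSpace α]
    [TopologicalSpace β] [Zero β] [T2Space β] {f : α → β} (hf : Continuous f)
    {x : α} (hx : x ∉ interior (tsupport f)) : f x = 0 := by
  have hZ : IsClosed {y | f y = 0} := isClosed_eq hf continuous_const
  have hsub : (tsupport f)ᶜ ⊆ {y | f y = 0} := fun y hy =>
    image_eq_zero_of_notMem_tsupport hy
  have : closure ((tsupport f)ᶜ) ⊆ {y | f y = 0} := hZ.closure_subset_iff.mpr hsub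
  exact this (by rwa [closure_compl])

/-- If a `C¹` path `γ : [0,T] → ℝ^n` does not visit the interiors of the
supports of continuous one-forms `φ₁,…,φ_m` in order, then the iterated line
integral `∫_{0<t₁<⋯<t_m<T} φ₁(dγ)⋯φ_m(dγ)` (the integral over the simplex of
`∏ i ⟨φ_i(γ(t_i)), γ'(t_i)⟩`) vanishes. One-forms are identified with the
vector of their coefficients, so `⟨φ(y), v⟩ = ∑ j, φ(y)_j v_j`. -/
theorem stmt16 (n m : ℕ) (hm : 1 ≤ m) (T : ℝ) (hT : 0 < T)
    (γ : ℝ → (Fin n → ℝ)) (hγ : ContDiff ℝ 1 γ)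
    (φ : Fin m → (Fin n → ℝ) → (Fin n → ℝ)) (hφ : ∀ i, Continuous (φ i))
    (hvisit : ¬ ∃ t : Fin m → ℝ, StrictMono t ∧ (∀ i, t i ∈ Set.Icc 0 T)
      ∧ ∀ i, γ (t i) ∈ interior (tsupport (φ i))) :
    (∫ t in {t : Fin m → ℝ | (∀ i, t i ∈ Set.Ioo 0 T) ∧ StrictMono t},
      ∏ i, ∑ j, φ i (γ (t i)) j * deriv γ (t i) j) = 0 := by
  apply setIntegral_eq_zero_of_forall_eq_zero
  rintro t ⟨ht, hmono⟩
  -- some coordinate misses the interior of the support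
  have : ∃ i, γ (t i) ∉ interior (tsupport (φ i)) := by
    by_contra h
    push_neg at h
    exact hvisit ⟨t, hmono, fun i => Set.mem_Icc_of_Ioo (ht i), h⟩
  obtain ⟨i, hi⟩ := this
  apply Finset.prod_eq_zero (Finset.mem_univ i)
  have hz : φ i (γ (t i)) = 0 := eq_zero_of_nmem_interior_tsupport (hφ i) hi
  simp [hz]
end

section
/- Let V₁,…,V_d : ℝ^n → ℝ^n be C¹ vector fields, w : [0,T] → ℝ^d a C¹ driving path, X : [0,T] → ℝ^n the solution of X' = Σ_α V_α(X) (w^α)', and Φ : [0,T] → GL(n,ℝ) the Jacobian flow solving Φ' = Σ_α DV_α(X) Φ (w^α)' with Φ₀ = Id. Then for any C¹ vector field W : ℝ^n → ℝ^n, the pull-back t ↦ Φ_t^{-1} W(X_t) satisfies Φ_t^{-1} W(X_t) = W(X₀) + ∫₀^t Φ_s^{-1} [V_α, W](X_s) (w^α)'(s) ds, where [V,W] = DW·V − DV·W is the Lie bracket. -/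
/-
Differentiating `s ↦ Ψ_s W(X_s)` with `Ψ' = -Ψ Φ' Ψ` and `Φ' = A Φ`, where `A = Σ_α (w^α)' DV_α(X)`,
gives `Ψ (DW(X) X' - A W(X)) = Σ_α (w^α)' Ψ [V_α, W](X)` since `X' = Σ_α (w^α)' V_α(X)`;
the fundamental theorem of calculus then integrates this derivative from `0`, where `Ψ_0 = Id`.
-/

open MeasureTheory intervalIntegral

open VectorField

section

variable {𝕜 : Type*} [NontriviallyNormedField 𝕜]

theorem HasDerivAt.inverse_of_mul_eq_one {R : Type*} [NormedRing R] [NormedAlgebra 𝕜 R]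
    [HasSummableGeomSeries R] {Φ Ψ : 𝕜 → R} {Φ' : R} {t : 𝕜} (hΦ : HasDerivAt Φ Φ' t)
    (hΨ : ∀ s, Ψ s * Φ s = 1 ∧ Φ s * Ψ s = 1) :
    HasDerivAt Ψ (-(Ψ t * Φ' * Ψ t)) t := by
  let u : 𝕜 → Rˣ := fun s => ⟨Φ s, Ψ s, (hΨ s).2, (hΨ s).1⟩
  have hΨ_eq : Ψ = Ring.inverse ∘ Φ := funext fun s => (Ring.inverse_unit (u s)).symm
  rw [hΨ_eq]
  simpa [show Φ t = u t from rfl, Ring.inverse_unit, mul_assoc] using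
    (hasFDerivAt_ringInverse (𝕜 := 𝕜) (u t)).comp_hasDerivAt t hΦ

theorem hasDerivAt_inverse_apply_comp {E : Type*} [NormedAddCommGroup E] [NormedSpace 𝕜 E]
    [CompleteSpace E] {Φ Ψ : 𝕜 → E →L[𝕜] E} {A : E →L[𝕜] E} {X : 𝕜 → E} {X' : E}
    {W : E → E} {t : 𝕜} (hΦ : HasDerivAt Φ (A * Φ t) t)
    (hΨ : ∀ s, Ψ s * Φ s = 1 ∧ Φ s * Ψ s = 1) (hX : HasDerivAt X X' t)
    (hW : DifferentiableAt 𝕜 W (X t)) :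
    HasDerivAt (fun s => Ψ s (W (X s))) (Ψ t (fderiv 𝕜 W (X t) X' - A (W (X t)))) t := by
  refine ((hΦ.inverse_of_mul_eq_one hΨ).clm_apply
    (hW.hasFDerivAt.comp_hasDerivAt t hX)).congr_deriv ?_
  rw [mul_assoc, mul_assoc, (hΨ t).2, mul_one, map_sub]
  simp only [neg_apply, mul_apply_eq_comp, Function.comp_apply]
  abel

theorem sum_smul_lieBracket {E ι : Type*} [NormedAddCommGroup E] [NormedSpace 𝕜 E] [Fintype ι]
    (c : ι → 𝕜) (V : ι → E → E) (W : E → E) (x : E) :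
    ∑ i, c i • lieBracket 𝕜 (V i) W x
      = fderiv 𝕜 W x (∑ i, c i • V i x) - (∑ i, c i • fderiv 𝕜 (V i) x) (W x) := by
  simp [lieBracket_eq, smul_sub, Finset.sum_sub_distrib]

end

theorem stmt19_general (n d : ℕ) (T : ℝ)
    (V : Fin d → (Fin n → ℝ) → (Fin n → ℝ)) (hV : ∀ α, ContDiff ℝ 1 (V α))
    (W : (Fin n → ℝ) → (Fin n → ℝ)) (hW : ContDiff ℝ 1 W)
    (w : ℝ → Fin d → ℝ) (hw : ContDiff ℝ 1 w)
    (X : ℝ → (Fin n → ℝ))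
    (hX : ∀ t, HasDerivAt X (∑ α, deriv w t α • V α (X t)) t)
    (Φ Ψ : ℝ → (Fin n → ℝ) →L[ℝ] (Fin n → ℝ))
    (hΦ : ∀ t, HasDerivAt Φ
      (∑ α, deriv w t α • ((fderiv ℝ (V α) (X t)).comp (Φ t))) t)
    (hΦ0 : Φ 0 = ContinuousLinearMap.id ℝ (Fin n → ℝ))
    (hΨ : ∀ t, (Ψ t).comp (Φ t) = ContinuousLinearMap.id ℝ (Fin n → ℝ)
      ∧ (Φ t).comp (Ψ t) = ContinuousLinearMap.id ℝ (Fin n → ℝ)) :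
    ∀ t ∈ Set.Icc (0 : ℝ) T,
      Ψ t (W (X t))
        = W (X 0) + ∫ s in (0 : ℝ)..t, ∑ α, deriv w s α •
            Ψ s (fderiv ℝ W (X s) (V α (X s)) - fderiv ℝ (V α) (X s) (W (X s))) := by
  have hΨΦ : ∀ s, Ψ s * Φ s = 1 ∧ Φ s * Ψ s = 1 := hΨ
  have hΨ0 : Ψ 0 = 1 := calc
    Ψ 0 = Ψ 0 * Φ 0 := by rw [hΦ0]; rfl
    _ = 1 := (hΨΦ 0).1
  have hXc : Continuous X := continuous_iff_continuousAt.2 fun s => (hX s).continuousAt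
  have hΦ_comp : ∀ s, HasDerivAt Φ ((∑ α, deriv w s α • fderiv ℝ (V α) (X s)) * Φ s) s :=
    fun s => (hΦ s).congr_deriv (by simp only [Finset.sum_mul, smul_mul_assoc]; rfl)
  have hΨc : Continuous Ψ :=
    continuous_iff_continuousAt.2 fun s => ((hΦ_comp s).inverse_of_mul_eq_one hΨΦ).continuousAt
  let F : ℝ → Fin n → ℝ := fun s => ∑ α, deriv w s α • Ψ s (lieBracket ℝ (V α) W (X s))
  have hF : ∀ s, HasDerivAt (fun s => Ψ s (W (X s))) (F s) s := fun s =>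
    (hasDerivAt_inverse_apply_comp (hΦ_comp s) hΨΦ (hX s)
      (hW.differentiable one_ne_zero _)).congr_deriv (by
        simp only [F, ← map_smul, ← map_sum, sum_smul_lieBracket])
  have hFc : Continuous F := continuous_finsetSum _ fun α _ =>
    ((continuous_apply α).comp (hw.continuous_deriv le_rfl)).smul <| hΨc.clm_apply <|
      ((hV α).lieBracket_vectorField (m := 0) hW (zero_add _).le).continuous.comp hXc
  intro t _
  show Ψ t (W (X t)) = W (X 0) + ∫ s in (0 : ℝ)..t, F s
  rw [integral_eq_sub_of_hasDerivAt (fun s _ => hF s) (hFc.intervalIntegrable 0 t), hΨ0,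
    one_apply_eq_self, add_sub_cancel]

/-- Pull-back of a vector field by the Jacobian flow of a driven ODE: if
`X' = Σ_α V_α(X)(w^α)'`, `Φ` solves the linearised equation
`Φ' = Σ_α (w^α)' DV_α(X) ∘ Φ` with `Φ₀ = Id`, and `Ψ_t = Φ_t^{-1}`, then for
every `C¹` vector field `W` and `t ∈ [0,T]`,
`Φ_t^{-1} W(X_t) = W(X₀) + ∫₀^t Φ_s^{-1} [V_α,W](X_s) (w^α)'(s) ds`, where
`[V,W](x) = DW(x)V(x) − DV(x)W(x)`. -/
theorem stmt19 (n d : ℕ) (T : ℝ) (hT : 0 ≤ T)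
    (V : Fin d → (Fin n → ℝ) → (Fin n → ℝ)) (hV : ∀ α, ContDiff ℝ 1 (V α))
    (W : (Fin n → ℝ) → (Fin n → ℝ)) (hW : ContDiff ℝ 1 W)
    (w : ℝ → Fin d → ℝ) (hw : ContDiff ℝ 1 w)
    (X : ℝ → (Fin n → ℝ))
    (hX : ∀ t, HasDerivAt X (∑ α, deriv w t α • V α (X t)) t)
    (Φ Ψ : ℝ → (Fin n → ℝ) →L[ℝ] (Fin n → ℝ))
    (hΦ : ∀ t, HasDerivAt Φ
      (∑ α, deriv w t α • ((fderiv ℝ (V α) (X t)).comp (Φ t))) t)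
    (hΦ0 : Φ 0 = ContinuousLinearMap.id ℝ (Fin n → ℝ))
    (hΨ : ∀ t, (Ψ t).comp (Φ t) = ContinuousLinearMap.id ℝ (Fin n → ℝ)
      ∧ (Φ t).comp (Ψ t) = ContinuousLinearMap.id ℝ (Fin n → ℝ)) :
    ∀ t ∈ Set.Icc (0 : ℝ) T,
      Ψ t (W (X t))
        = W (X 0) + ∫ s in (0 : ℝ)..t, ∑ α, deriv w s α •
            Ψ s (fderiv ℝ W (X s) (V α (X s)) - fderiv ℝ (V α) (X s) (W (X s))) :=
  stmt19_general n d T V hV W hW w hw X hX Φ Ψ hΦ hΦ0 hΨ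
end
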